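/- arXiv:0906.5588 — 2 statements merged into one kernel-verified Lean document; each statement's English description precedes it below -/
import Mathlib

section
/- Let M > 0. For r > 2M set μ = 2M/r and f₀(r) = −M³/(1 + 4μ^{−2}), and for a differentiable function h of r let h′ denote its derivative with respect to the tortoise coordinate, i.e. h′ := (1 − 2M/r) · dh/dr. Then for every r > 2M: (1−μ)^{−1} f₀′′′ + (4/r) f₀′′ + (μ/r²) f₀′ − (2μ/r³)(3−4μ) f₀ = −μ⁶ · (192 + μ(128 + μ(−784 + μ(464 + μ(−28 + μ(52 + μ(−3 + 4μ))))))) / (4 (4 + μ²)⁴). -/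
open Real

noncomputable section

set_option maxHeartbeats 4000000

/-- differentiation with respect to the tortoise coordinate, expressed as an
operation on functions of the area-radius `r`: `h' := (1 - 2M/r) dh/dr`. -/
def Dstar (M : ℝ) (h : ℝ → ℝ) : ℝ → ℝ := fun ρ => (1 - 2 * M / ρ) * deriv h ρ

/-- the multiplier profile `f₀(r) = -M³/(1 + 4 μ⁻²)`, `μ = 2M/r`. -/
def f0 (M : ℝ) : ℝ → ℝ := fun ρ => -(M ^ 3) / (1 + 4 * ((2 * M / ρ)⁻¹) ^ 2)

/-- The explicit algebraic identity from the proof of Proposition 7 of the paper: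
the coefficient of `φ²` in the modified current `K^{X₀,w^{X₀}}` on the exterior
region `r > 2M`.  Here `μ = 2M/r` and primes denote tortoise-coordinate
derivatives `d/dr* = (1 - 2M/r) d/dr`. -/
theorem f0_current_identity (M : ℝ) (hM : 0 < M) (ρ : ℝ) (hρ : 2 * M < ρ) :
    (1 - 2 * M / ρ)⁻¹ * Dstar M (Dstar M (Dstar M (f0 M))) ρ
      + (4 / ρ) * Dstar M (Dstar M (f0 M)) ρ
      + ((2 * M / ρ) / ρ ^ 2) * Dstar M (f0 M) ρ
      - (2 * (2 * M / ρ) / ρ ^ 3) * (3 - 4 * (2 * M / ρ)) * f0 M ρ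
    = -((2 * M / ρ) ^ 6
          * (192 + (2 * M / ρ) * (128 + (2 * M / ρ) * (-784 + (2 * M / ρ)
              * (464 + (2 * M / ρ) * (-28 + (2 * M / ρ) * (52 + (2 * M / ρ)
                  * (-3 + 4 * (2 * M / ρ)))))))))
        / (4 * (4 + (2 * M / ρ) ^ 2) ^ 4) := by
  have hMne : M ≠ 0 := ne_of_gt hM
  -- f0 as a global rational function
  have hf0eq : f0 M = fun x : ℝ => -M ^ 5 / (M ^ 2 + x ^ 2) := by
    funext x
    rcases eq_or_ne x 0 with rfl | hx
    · simp [f0]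
      field_simp
    · unfold f0
      have hAx : (M:ℝ) ^ 2 + x ^ 2 ≠ 0 := by positivity
      field_simp
      ring
  -- basic nonvanishing facts at ρ
  have hρ0 : (0:ℝ) < ρ := lt_trans (by linarith) hρ
  have hρne : ρ ≠ 0 := ne_of_gt hρ0
  have hAne : (M:ℝ) ^ 2 + ρ ^ 2 ≠ 0 := by positivity
  have hμne : 1 - 2 * M / ρ ≠ 0 := by
    have : 2 * M / ρ < 1 := (div_lt_one hρ0).mpr hρ
    linarith
  -- derivative of the base function at any point with the same nonvanishing
  have hA' : HasDerivAt (fun x : ℝ => M ^ 2 + x ^ 2) (2 * ρ) ρ := by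
    simpa using (hasDerivAt_pow 2 ρ).const_add (M ^ 2)
  have hf0' : HasDerivAt (f0 M) (2 * M ^ 5 * ρ / (M ^ 2 + ρ ^ 2) ^ 2) ρ := by
    rw [hf0eq]
    have h1 := (hA'.fun_inv hAne).const_mul (-M ^ 5)
    have h2 : (fun x : ℝ => -M ^ 5 / (M ^ 2 + x ^ 2))
        = fun x : ℝ => -M ^ 5 * (M ^ 2 + x ^ 2)⁻¹ := by
      funext x; ring
    rw [h2]
    exact h1.congr_deriv (by ring)
  -- first Dstar as rational function on Ioi 0
  set r1 : ℝ → ℝ := fun x => 2 * M ^ 5 * (x - 2 * M) / (M ^ 2 + x ^ 2) ^ 2 with hr1def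
  have hg1 : ∀ x ∈ Set.Ioi (0:ℝ), Dstar M (f0 M) x = r1 x := by
    intro x hx
    have hxne : x ≠ 0 := ne_of_gt hx
    have hAx : (M:ℝ) ^ 2 + x ^ 2 ≠ 0 := by positivity
    have hAx' : HasDerivAt (fun y : ℝ => M ^ 2 + y ^ 2) (2 * x) x := by
      simpa using (hasDerivAt_pow 2 x).const_add (M ^ 2)
    have hfx : HasDerivAt (f0 M) (2 * M ^ 5 * x / (M ^ 2 + x ^ 2) ^ 2) x := by
      rw [hf0eq]
      have h1 := (hAx'.fun_inv hAx).const_mul (-M ^ 5)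
      have h2 : (fun y : ℝ => -M ^ 5 / (M ^ 2 + y ^ 2))
          = fun y : ℝ => -M ^ 5 * (M ^ 2 + y ^ 2)⁻¹ := by
        funext y; ring
      rw [h2]
      exact h1.congr_deriv (by ring)
    unfold Dstar
    rw [hfx.deriv, hr1def]
    field_simp
  -- derivative of r1
  have hr1' : HasDerivAt r1
      ((2 * M ^ 5 * (M ^ 2 + ρ ^ 2) ^ 2
        - 2 * M ^ 5 * (ρ - 2 * M) * (2 * (M ^ 2 + ρ ^ 2) * (2 * ρ)))
        / ((M ^ 2 + ρ ^ 2) ^ 2) ^ 2) ρ := by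
    have hN : HasDerivAt (fun x : ℝ => 2 * M ^ 5 * (x - 2 * M)) (2 * M ^ 5) ρ := by
      simpa using ((hasDerivAt_id ρ).sub_const (2 * M)).const_mul (2 * M ^ 5)
    have hD : HasDerivAt (fun x : ℝ => (M ^ 2 + x ^ 2) ^ 2)
        (2 * (M ^ 2 + ρ ^ 2) * (2 * ρ)) ρ := by
      simpa using hA'.fun_pow 2
    have hDne : ((M:ℝ) ^ 2 + ρ ^ 2) ^ 2 ≠ 0 := pow_ne_zero _ hAne
    exact hN.div hD hDne
  -- second Dstar as rational function on Ioi 0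
  set r2 : ℝ → ℝ := fun x =>
    2 * M ^ 5 * (x - 2 * M) * (M ^ 2 + 8 * M * x - 3 * x ^ 2)
      / (x * (M ^ 2 + x ^ 2) ^ 3) with hr2def
  have hg2 : ∀ x ∈ Set.Ioi (0:ℝ), Dstar M (Dstar M (f0 M)) x = r2 x := by
    intro x hx
    have hxne : x ≠ 0 := ne_of_gt hx
    have hAx : (M:ℝ) ^ 2 + x ^ 2 ≠ 0 := by positivity
    have hAx' : HasDerivAt (fun y : ℝ => M ^ 2 + y ^ 2) (2 * x) x := by
      simpa using (hasDerivAt_pow 2 x).const_add (M ^ 2)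
    have hr1x : HasDerivAt r1
        ((2 * M ^ 5 * (M ^ 2 + x ^ 2) ^ 2
          - 2 * M ^ 5 * (x - 2 * M) * (2 * (M ^ 2 + x ^ 2) * (2 * x)))
          / ((M ^ 2 + x ^ 2) ^ 2) ^ 2) x := by
      have hN : HasDerivAt (fun y : ℝ => 2 * M ^ 5 * (y - 2 * M)) (2 * M ^ 5) x := by
        simpa using ((hasDerivAt_id x).sub_const (2 * M)).const_mul (2 * M ^ 5)
      have hD : HasDerivAt (fun y : ℝ => (M ^ 2 + y ^ 2) ^ 2)
          (2 * (M ^ 2 + x ^ 2) * (2 * x)) x := by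
        simpa using hAx'.fun_pow 2
      exact hN.div hD (pow_ne_zero _ hAx)
    have hev : Dstar M (f0 M) =ᶠ[nhds x] r1 := by
      filter_upwards [isOpen_Ioi.mem_nhds hx] with y hy
      exact hg1 y hy
    have hDs : Dstar M (Dstar M (f0 M)) x = (1 - 2 * M / x) * deriv (Dstar M (f0 M)) x := rfl
    rw [hDs, hev.deriv_eq, hr1x.deriv, hr2def]
    field_simp
    ring
  -- derivative of r2
  have hr2' : HasDerivAt r2
      (((2 * M ^ 5 * (M ^ 2 + 8 * M * ρ - 3 * ρ ^ 2)
          + 2 * M ^ 5 * (ρ - 2 * M) * (8 * M - 3 * (2 * ρ)))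
            * (ρ * (M ^ 2 + ρ ^ 2) ^ 3)
        - 2 * M ^ 5 * (ρ - 2 * M) * (M ^ 2 + 8 * M * ρ - 3 * ρ ^ 2)
            * (1 * (M ^ 2 + ρ ^ 2) ^ 3 + ρ * (3 * (M ^ 2 + ρ ^ 2) ^ 2 * (2 * ρ))))
        / (ρ * (M ^ 2 + ρ ^ 2) ^ 3) ^ 2) ρ := by
    have hu : HasDerivAt (fun x : ℝ => 2 * M ^ 5 * (x - 2 * M)) (2 * M ^ 5) ρ := by
      simpa using ((hasDerivAt_id ρ).sub_const (2 * M)).const_mul (2 * M ^ 5)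
    have hv : HasDerivAt (fun x : ℝ => M ^ 2 + 8 * M * x - 3 * x ^ 2)
        (8 * M - 3 * (2 * ρ)) ρ := by
      have h1 : HasDerivAt (fun x : ℝ => M ^ 2 + 8 * M * x) (8 * M) ρ := by
        simpa using ((hasDerivAt_id ρ).const_mul (8 * M)).const_add (M ^ 2)
      have h2 : HasDerivAt (fun x : ℝ => 3 * x ^ 2) (3 * (2 * ρ)) ρ := by
        simpa using (hasDerivAt_pow 2 ρ).const_mul 3
      exact h1.sub h2
    have hN : HasDerivAt
        (fun x : ℝ => 2 * M ^ 5 * (x - 2 * M) * (M ^ 2 + 8 * M * x - 3 * x ^ 2))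
        (2 * M ^ 5 * (M ^ 2 + 8 * M * ρ - 3 * ρ ^ 2)
          + 2 * M ^ 5 * (ρ - 2 * M) * (8 * M - 3 * (2 * ρ))) ρ := hu.mul hv
    have hD : HasDerivAt (fun x : ℝ => x * (M ^ 2 + x ^ 2) ^ 3)
        (1 * (M ^ 2 + ρ ^ 2) ^ 3 + ρ * (3 * (M ^ 2 + ρ ^ 2) ^ 2 * (2 * ρ))) ρ := by
      have h3 : HasDerivAt (fun x : ℝ => (M ^ 2 + x ^ 2) ^ 3)
          (3 * (M ^ 2 + ρ ^ 2) ^ 2 * (2 * ρ)) ρ := by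
        simpa using hA'.fun_pow 3
      exact (hasDerivAt_id ρ).mul h3
    have hDne : ρ * ((M:ℝ) ^ 2 + ρ ^ 2) ^ 3 ≠ 0 :=
      mul_ne_zero hρne (pow_ne_zero _ hAne)
    exact hN.div hD hDne
  -- the third Dstar
  have hev2 : Dstar M (Dstar M (f0 M)) =ᶠ[nhds ρ] r2 := by
    filter_upwards [isOpen_Ioi.mem_nhds hρ0] with y hy
    exact hg2 y hy
  have hD3 : Dstar M (Dstar M (Dstar M (f0 M))) ρ
      = (1 - 2 * M / ρ) * (((2 * M ^ 5 * (M ^ 2 + 8 * M * ρ - 3 * ρ ^ 2)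
          + 2 * M ^ 5 * (ρ - 2 * M) * (8 * M - 3 * (2 * ρ)))
            * (ρ * (M ^ 2 + ρ ^ 2) ^ 3)
        - 2 * M ^ 5 * (ρ - 2 * M) * (M ^ 2 + 8 * M * ρ - 3 * ρ ^ 2)
            * (1 * (M ^ 2 + ρ ^ 2) ^ 3 + ρ * (3 * (M ^ 2 + ρ ^ 2) ^ 2 * (2 * ρ))))
        / (ρ * (M ^ 2 + ρ ^ 2) ^ 3) ^ 2) := by
    have hDs : Dstar M (Dstar M (Dstar M (f0 M))) ρ
        = (1 - 2 * M / ρ) * deriv (Dstar M (Dstar M (f0 M))) ρ := rfl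
    rw [hDs, hev2.deriv_eq, hr2'.deriv]
  rw [hD3, hg2 ρ hρ0, hg1 ρ hρ0, hf0eq, hr1def, hr2def]
  have hBne : (4:ℝ) + (2 * M / ρ) ^ 2 ≠ 0 := by positivity
  have h2M : ρ - 2 * M ≠ 0 := by linarith
  field_simp
  ring
end
end

section
/- Let f : ℝ × ℝ → ℝ (written f(s,t)) and g : ℝ → ℝ be continuously differentiable, let t₁ ≤ t* and r₁ ≤ r₂ be real numbers, and let P := { (s,t) : t₁ ≤ t ≤ t*, r₁ − (t* − t) ≤ s ≤ r₂ + (t* − t) }. Set u₁ := (t* − r₁)/2 and v₂ := (t* + r₂)/2. Then: t* ∫_{r₁}^{r₂} f(s, t*) g(s) ds + 2 v₂ ∫_{t₁ − v₂}^{t* − v₂} f(v₂ − u, v₂ + u) g(v₂ − u) du + 2 u₁ ∫_{t₁ − u₁}^{t* − u₁} f(v − u₁, v + u₁) g(v − u₁) dv = t₁ ∫_{r₁ − (t* − t₁)}^{r₂ + (t* − t₁)} f(s, t₁) g(s) ds + ∬_P [ 2 f(s,t) g(s) + ( t ∂_t f(s,t) + s ∂_s f(s,t) ) g(s) + s f(s,t)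 g′(s) ] ds dt. -/
open Real MeasureTheory

open intervalIntegral Metric

lemma trap_hasFDerivAt_corner (F : ℝ → ℝ → ℝ) (hF : Continuous (Function.uncurry F))
    (x₀ t₀ : ℝ) :
    HasFDerivAt (fun p : ℝ × ℝ => ∫ s in x₀..p.1, F s p.2)
      (F x₀ t₀ • ContinuousLinearMap.fst ℝ ℝ ℝ) (x₀, t₀) := by
  rw [hasFDerivAt_iff_isLittleO_nhds_zero, Asymptotics.isLittleO_iff]
  intro ε hε
  rcases Metric.continuousAt_iff.1 hF.continuousAt ε hε with ⟨δ, hδ, hball⟩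
  filter_upwards [Metric.ball_mem_nhds (0 : ℝ × ℝ) hδ] with p hp
  simp only [mem_ball, dist_zero_right] at hp
  have hInt : ∀ (t : ℝ) (x y : ℝ), IntervalIntegrable (fun s => F s t) volume x y :=
    fun t x y => (hF.comp (continuous_id.prodMk continuous_const)).intervalIntegrable x y
  have key : (∫ s in x₀..(x₀ + p.1), F s (t₀ + p.2)) - F x₀ t₀ * p.1
      = ∫ s in x₀..(x₀ + p.1), (F s (t₀ + p.2) - F x₀ t₀) := by
    rw [intervalIntegral.integral_sub (hInt _ _ _) intervalIntegrable_const]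
    simp [mul_comm]
  have hbound : ∀ s ∈ Set.uIoc x₀ (x₀ + p.1), ‖F s (t₀ + p.2) - F x₀ t₀‖ ≤ ε := by
    intro s hs
    rw [Set.uIoc, Set.mem_Ioc] at hs
    have hmin : x₀ - |p.1| ≤ min x₀ (x₀ + p.1) :=
      le_min (by linarith [abs_nonneg p.1]) (by linarith [neg_abs_le p.1])
    have hmax : max x₀ (x₀ + p.1) ≤ x₀ + |p.1| :=
      max_le (by linarith [abs_nonneg p.1]) (by linarith [le_abs_self p.1])
    have hs' : |s - x₀| ≤ |p.1| := by
      rw [abs_le]; exact ⟨by linarith [hs.1], by linarith [hs.2]⟩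
    have hd : dist ((s, t₀ + p.2) : ℝ × ℝ) (x₀, t₀) < δ := by
      rw [Prod.dist_eq, max_lt_iff]
      constructor
      · rw [Real.dist_eq]
        calc |s - x₀| ≤ |p.1| := hs'
          _ ≤ ‖p‖ := (Real.norm_eq_abs p.1) ▸ norm_fst_le p
          _ < δ := hp
      · rw [Real.dist_eq, add_sub_cancel_left]
        calc |p.2| ≤ ‖p‖ := (Real.norm_eq_abs p.2) ▸ norm_snd_le p
          _ < δ := hp
    have := hball hd
    rw [dist_eq_norm] at this
    exact this.le
  calc ‖((∫ s in x₀..((x₀, t₀) + p).1, F s ((x₀, t₀) + p).2) - ∫ s in x₀..x₀, F s t₀)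
        - (F x₀ t₀ • ContinuousLinearMap.fst ℝ ℝ ℝ) p‖
      = ‖∫ s in x₀..(x₀ + p.1), (F s (t₀ + p.2) - F x₀ t₀)‖ := by
        simp only [ContinuousLinearMap.smul_apply, ContinuousLinearMap.coe_fst', smul_eq_mul,
          Prod.fst_add, Prod.snd_add, intervalIntegral.integral_same, sub_zero]
        rw [← key]
    _ ≤ ε * |x₀ + p.1 - x₀| := intervalIntegral.norm_integral_le_of_norm_le_const hbound
    _ ≤ ε * ‖p‖ := by
        rw [add_sub_cancel_left]
        exact mul_le_mul_of_nonneg_left ((Real.norm_eq_abs p.1) ▸ norm_fst_le p) hε.le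

lemma trap_hasDerivAt_param (F Ft : ℝ → ℝ → ℝ)
    (hF : Continuous (Function.uncurry F))
    (hFt_cont : Continuous (Function.uncurry Ft))
    (hFt : ∀ s t, HasDerivAt (fun t' => F s t') (Ft s t) t)
    (c x₀ t₀ : ℝ) :
    HasDerivAt (fun t => ∫ s in c..x₀, F s t) (∫ s in c..x₀, Ft s t₀) t₀ := by
  obtain ⟨C, hC⟩ : ∃ C, ∀ p ∈ (Set.uIcc c x₀) ×ˢ (closedBall t₀ 1), ‖Function.uncurry Ft p‖ ≤ C :=
    (isCompact_uIcc.prod (isCompact_closedBall t₀ 1)).exists_bound_of_continuousOn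
      hFt_cont.continuousOn
  have cont_left : ∀ t : ℝ, Continuous (fun s => F s t) :=
    fun t => hF.comp (continuous_id.prodMk continuous_const)
  have cont_left' : ∀ t : ℝ, Continuous (fun s => Ft s t) :=
    fun t => hFt_cont.comp (continuous_id.prodMk continuous_const)
  exact (intervalIntegral.hasDerivAt_integral_of_dominated_loc_of_deriv_le
    (F := fun t s => F s t) (F' := fun t s => Ft s t) (bound := fun _ => C)
    (ball_mem_nhds t₀ one_pos)
    (Filter.Eventually.of_forall fun t => ((cont_left t).aestronglyMeasurable).restrict)
    ((cont_left t₀).intervalIntegrable c x₀)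
    ((cont_left' t₀).aestronglyMeasurable).restrict
    (Filter.Eventually.of_forall fun s hs x hx =>
      hC (s, x) ⟨Set.uIoc_subset_uIcc hs, ball_subset_closedBall hx⟩)
    intervalIntegrable_const
    (Filter.Eventually.of_forall fun s _ x _ => hFt s x)).2

lemma trap_hasFDerivAt_K (F Ft : ℝ → ℝ → ℝ)
    (hF : Continuous (Function.uncurry F))
    (hFt_cont : Continuous (Function.uncurry Ft))
    (hFt : ∀ s t, HasDerivAt (fun t' => F s t') (Ft s t) t)
    (c x₀ t₀ : ℝ) :
    HasFDerivAt (fun p : ℝ × ℝ => ∫ s in c..p.1, F s p.2)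
      (F x₀ t₀ • ContinuousLinearMap.fst ℝ ℝ ℝ
        + (∫ s in c..x₀, Ft s t₀) • ContinuousLinearMap.snd ℝ ℝ ℝ) (x₀, t₀) := by
  have h1 : HasFDerivAt (fun p : ℝ × ℝ => ∫ s in c..x₀, F s p.2)
      ((∫ s in c..x₀, Ft s t₀) • ContinuousLinearMap.snd ℝ ℝ ℝ) (x₀, t₀) :=
    (trap_hasDerivAt_param F Ft hF hFt_cont hFt c x₀ t₀).comp_hasFDerivAt (f := Prod.snd) (x₀, t₀)
      hasFDerivAt_snd
  have h2 := trap_hasFDerivAt_corner F hF x₀ t₀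
  have h3 := h1.add h2
  have heq : (fun p : ℝ × ℝ => ∫ s in c..p.1, F s p.2)
      =ᶠ[nhds (x₀, t₀)] fun p : ℝ × ℝ =>
        (∫ s in c..x₀, F s p.2) + ∫ s in x₀..p.1, F s p.2 := by
    apply Filter.Eventually.of_forall
    intro p
    exact (intervalIntegral.integral_add_adjacent_intervals
      ((hF.comp (continuous_id.prodMk continuous_const)).intervalIntegrable _ _)
      ((hF.comp (continuous_id.prodMk continuous_const)).intervalIntegrable _ _)).symm
  have h4 := h3.congr_of_eventuallyEq heq
  rw [add_comm] at h4
  exact h4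


/-- Proposition 21 of the paper: the integration-by-parts (divergence theorem)
identity for the vector field `(u F, v F)`, `F = f g`, on the trapezoid `P` bounded
by the slices `t = t₁`, `t = t*` and the null segments `v = v₂ = (t*+r₂)/2`,
`u = u₁ = (t*-r₁)/2`; here `u = (t-s)/2`, `v = (t+s)/2` and `f` is written `f(s,t)`. -/
theorem trapezoid_ibp_identity
    (f : ℝ → ℝ → ℝ) (g : ℝ → ℝ)
    (hf : ContDiff ℝ 1 (Function.uncurry f)) (hg : ContDiff ℝ 1 g)
    (t₁ tstar r₁ r₂ : ℝ) (ht : t₁ ≤ tstar) (hr : r₁ ≤ r₂) :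
    tstar * (∫ s in r₁..r₂, f s tstar * g s)
      + 2 * ((tstar + r₂) / 2)
        * (∫ u in (t₁ - (tstar + r₂) / 2)..(tstar - (tstar + r₂) / 2),
            f ((tstar + r₂) / 2 - u) ((tstar + r₂) / 2 + u) * g ((tstar + r₂) / 2 - u))
      + 2 * ((tstar - r₁) / 2)
        * (∫ v in (t₁ - (tstar - r₁) / 2)..(tstar - (tstar - r₁) / 2),
            f (v - (tstar - r₁) / 2) (v + (tstar - r₁) / 2) * g (v - (tstar - r₁) / 2))
    = t₁ * (∫ s in (r₁ - (tstar - t₁))..(r₂ + (tstar - t₁)), f s t₁ * g s)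
      + ∫ t in t₁..tstar, ∫ s in (r₁ - (tstar - t))..(r₂ + (tstar - t)),
          (2 * f s t * g s
            + (t * deriv (fun t' => f s t') t + s * deriv (fun s' => f s' t) s) * g s
            + s * f s t * deriv g s) := by
  -- basic objects
  set F : ℝ → ℝ → ℝ := fun s t => f s t * g s with hF_def
  set Ft : ℝ → ℝ → ℝ := fun s t => fderiv ℝ (Function.uncurry f) (s, t) ((0:ℝ), (1:ℝ)) * g s
    with hFt_def
  set Fs : ℝ → ℝ → ℝ := fun s t =>
      fderiv ℝ (Function.uncurry f) (s, t) ((1:ℝ), (0:ℝ)) * g s + f s t * deriv g s with hFs_def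
  have hfd : Differentiable ℝ (Function.uncurry f) := hf.differentiable one_ne_zero
  have hgd : Differentiable ℝ g := hg.differentiable one_ne_zero
  have hDt : ∀ s t : ℝ, HasDerivAt (fun t' => f s t')
      (fderiv ℝ (Function.uncurry f) (s, t) ((0:ℝ), (1:ℝ))) t := fun s t =>
    (hfd (s, t)).hasFDerivAt.comp_hasDerivAt t ((hasDerivAt_const t s).prodMk (hasDerivAt_id t))
  have hDs : ∀ s t : ℝ, HasDerivAt (fun s' => f s' t)
      (fderiv ℝ (Function.uncurry f) (s, t) ((1:ℝ), (0:ℝ))) s := fun s t =>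
    by have := (hfd (s, t)).hasFDerivAt.comp_hasDerivAt s ((hasDerivAt_id' s).prodMk (hasDerivAt_const s t)); exact this
  have hg' : ∀ s : ℝ, HasDerivAt g (deriv g s) s := fun s => (hgd s).hasDerivAt
  -- derivative facts for F
  have hFt_deriv : ∀ s t : ℝ, HasDerivAt (fun t' => F s t') (Ft s t) t := fun s t =>
    (hDt s t).mul_const (g s)
  have hFs_deriv : ∀ s t : ℝ, HasDerivAt (fun s' => F s' t) (Fs s t) s := fun s t =>
    (hDs s t).mul (hg' s)
  have hsF_deriv : ∀ s t : ℝ, HasDerivAt (fun s' => s' * F s' t) (F s t + s * Fs s t) s := by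
    intro s t
    have := (hasDerivAt_id' s).mul (hFs_deriv s t)
    simpa [Pi.mul_def] using this
  -- continuity facts
  have hFc : Continuous (Function.uncurry F) := by
    exact (hf.continuous).mul (hg.continuous.comp continuous_fst)
  have hfderiv_cont : Continuous (fderiv ℝ (Function.uncurry f)) := hf.continuous_fderiv one_ne_zero
  have happly : ∀ v : ℝ × ℝ, Continuous fun p : ℝ × ℝ => fderiv ℝ (Function.uncurry f) p v :=
    fun v => (ContinuousLinearMap.apply ℝ ℝ v).continuous.comp hfderiv_cont
  have hFtc : Continuous (Function.uncurry Ft) := by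
    exact (happly (0, 1)).mul (hg.continuous.comp continuous_fst)
  have hFsc : Continuous (Function.uncurry Fs) := by
    exact ((happly (1, 0)).mul (hg.continuous.comp continuous_fst)).add
      ((hf.continuous).mul ((hg.continuous_deriv le_rfl).comp continuous_fst))
  have hFc1 : ∀ t : ℝ, Continuous (fun s => F s t) :=
    fun t => hFc.comp (continuous_id.prodMk continuous_const)
  have hFtc1 : ∀ t : ℝ, Continuous (fun s => Ft s t) :=
    fun t => hFtc.comp (continuous_id.prodMk continuous_const)
  have hFsc1 : ∀ t : ℝ, Continuous (fun s => Fs s t) :=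
    fun t => hFsc.comp (continuous_id.prodMk continuous_const)
  -- the primitive `K` and its derivative
  set K : ℝ × ℝ → ℝ := fun p => ∫ s in r₁..p.1, F s p.2 with hK_def
  have hK : ∀ x t : ℝ, HasFDerivAt K
      (F x t • ContinuousLinearMap.fst ℝ ℝ ℝ
        + (∫ s in r₁..x, Ft s t) • ContinuousLinearMap.snd ℝ ℝ ℝ) (x, t) :=
    fun x t => trap_hasFDerivAt_K F Ft hFc hFtc hFt_deriv r₁ x t
  -- derivative along t ↦ (r₂ + (tstar - t), t) and t ↦ (r₁ - (tstar - t), t)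
  have hKb : ∀ t : ℝ, HasDerivAt (fun τ => K (r₂ + (tstar - τ), τ))
      ((∫ s in r₁..(r₂ + (tstar - t)), Ft s t) - F (r₂ + (tstar - t)) t) t := by
    intro t
    have hb : HasDerivAt (fun τ : ℝ => (r₂ + (tstar - τ), τ)) ((-1 : ℝ), (1 : ℝ)) t := by
      exact (((hasDerivAt_id t).const_sub tstar).const_add r₂).prodMk (hasDerivAt_id t)
    have h1 : HasDerivAt (fun τ => K (r₂ + (tstar - τ), τ))
        ((F (r₂ + (tstar - t)) t • ContinuousLinearMap.fst ℝ ℝ ℝ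
          + (∫ s in r₁..(r₂ + (tstar - t)), Ft s t) • ContinuousLinearMap.snd ℝ ℝ ℝ)
          ((-1 : ℝ), (1 : ℝ))) t :=
      (hK (r₂ + (tstar - t)) t).comp_hasDerivAt (f := fun τ : ℝ => (r₂ + (tstar - τ), τ)) t hb
    have h2 : ((F (r₂ + (tstar - t)) t • ContinuousLinearMap.fst ℝ ℝ ℝ
          + (∫ s in r₁..(r₂ + (tstar - t)), Ft s t) • ContinuousLinearMap.snd ℝ ℝ ℝ)
          ((-1 : ℝ), (1 : ℝ)))
        = (∫ s in r₁..(r₂ + (tstar - t)), Ft s t) - F (r₂ + (tstar - t)) t := by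
      simp only [ContinuousLinearMap.add_apply, ContinuousLinearMap.coe_smul', Pi.smul_apply,
        ContinuousLinearMap.coe_fst', ContinuousLinearMap.coe_snd', smul_eq_mul]
      ring
    rw [h2] at h1
    exact h1
  have hKa : ∀ t : ℝ, HasDerivAt (fun τ => K (r₁ - (tstar - τ), τ))
      ((∫ s in r₁..(r₁ - (tstar - t)), Ft s t) + F (r₁ - (tstar - t)) t) t := by
    intro t
    have ha : HasDerivAt (fun τ : ℝ => (r₁ - (tstar - τ), τ)) ((1 : ℝ), (1 : ℝ)) t := by
      have h1 : HasDerivAt (fun τ : ℝ => r₁ - (tstar - τ)) (1 : ℝ) t := by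
        have := ((hasDerivAt_id t).const_sub tstar).const_sub r₁
        simpa using this
      exact h1.prodMk (hasDerivAt_id t)
    have h1 : HasDerivAt (fun τ => K (r₁ - (tstar - τ), τ))
        ((F (r₁ - (tstar - t)) t • ContinuousLinearMap.fst ℝ ℝ ℝ
          + (∫ s in r₁..(r₁ - (tstar - t)), Ft s t) • ContinuousLinearMap.snd ℝ ℝ ℝ)
          ((1 : ℝ), (1 : ℝ))) t :=
      (hK (r₁ - (tstar - t)) t).comp_hasDerivAt (f := fun τ : ℝ => (r₁ - (tstar - τ), τ)) t ha
    have h2 : ((F (r₁ - (tstar - t)) t • ContinuousLinearMap.fst ℝ ℝ ℝ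
          + (∫ s in r₁..(r₁ - (tstar - t)), Ft s t) • ContinuousLinearMap.snd ℝ ℝ ℝ)
          ((1 : ℝ), (1 : ℝ)))
        = (∫ s in r₁..(r₁ - (tstar - t)), Ft s t) + F (r₁ - (tstar - t)) t := by
      simp only [ContinuousLinearMap.add_apply, ContinuousLinearMap.coe_smul', Pi.smul_apply,
        ContinuousLinearMap.coe_fst', ContinuousLinearMap.coe_snd', smul_eq_mul]
      ring
    rw [h2] at h1
    exact h1
  -- Φ and its derivative ΦD
  set Phi : ℝ → ℝ := fun t => t * (K (r₂ + (tstar - t), t) - K (r₁ - (tstar - t), t))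
    with hPhi_def
  set PhiD : ℝ → ℝ := fun t =>
      (K (r₂ + (tstar - t), t) - K (r₁ - (tstar - t), t))
        + t * (((∫ s in r₁..(r₂ + (tstar - t)), Ft s t)
            - (∫ s in r₁..(r₁ - (tstar - t)), Ft s t))
          - F (r₂ + (tstar - t)) t - F (r₁ - (tstar - t)) t) with hPhiD_def
  have hPhi : ∀ t : ℝ, HasDerivAt Phi (PhiD t) t := by
    intro t
    have h := (hasDerivAt_id t).mul ((hKb t).sub (hKa t))
    have heq : PhiD t
        = 1 * (K (r₂ + (tstar - t), t) - K (r₁ - (tstar - t), t))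
          + id t * (((∫ s in r₁..(r₂ + (tstar - t)), Ft s t) - F (r₂ + (tstar - t)) t)
            - ((∫ s in r₁..(r₁ - (tstar - t)), Ft s t) + F (r₁ - (tstar - t)) t)) := by
      show (K (r₂ + (tstar - t), t) - K (r₁ - (tstar - t), t))
        + t * (((∫ s in r₁..(r₂ + (tstar - t)), Ft s t)
            - (∫ s in r₁..(r₁ - (tstar - t)), Ft s t))
          - F (r₂ + (tstar - t)) t - F (r₁ - (tstar - t)) t) = _
      show _ = 1 * (K (r₂ + (tstar - t), t) - K (r₁ - (tstar - t), t))
          + t * (((∫ s in r₁..(r₂ + (tstar - t)), Ft s t) - F (r₂ + (tstar - t)) t)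
            - ((∫ s in r₁..(r₁ - (tstar - t)), Ft s t) + F (r₁ - (tstar - t)) t))
      ring
    rw [heq]
    exact h
  -- continuity of the pieces
  have hKcont : Continuous K := by
    apply intervalIntegral.continuous_parametric_intervalIntegral_of_continuous
      (f := fun (p : ℝ × ℝ) s => F s p.2) (s := fun p : ℝ × ℝ => p.1)
    · show Continuous fun q : (ℝ × ℝ) × ℝ => F q.2 q.1.2
      exact hFc.comp (continuous_snd.prodMk (continuous_snd.comp continuous_fst))
    · exact continuous_fst
  have hKFtcont : Continuous (fun p : ℝ × ℝ => ∫ s in r₁..p.1, Ft s p.2) := by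
    apply intervalIntegral.continuous_parametric_intervalIntegral_of_continuous
      (f := fun (p : ℝ × ℝ) s => Ft s p.2) (s := fun p : ℝ × ℝ => p.1)
    · show Continuous fun q : (ℝ × ℝ) × ℝ => Ft q.2 q.1.2
      exact hFtc.comp (continuous_snd.prodMk (continuous_snd.comp continuous_fst))
    · exact continuous_fst
  have hbc : Continuous (fun t : ℝ => r₂ + (tstar - t)) :=
    continuous_const.add (continuous_const.sub continuous_id)
  have hac : Continuous (fun t : ℝ => r₁ - (tstar - t)) :=
    continuous_const.sub (continuous_const.sub continuous_id)
  have hFbc : Continuous (fun t : ℝ => F (r₂ + (tstar - t)) t) :=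
    hFc.comp (hbc.prodMk continuous_id)
  have hFac : Continuous (fun t : ℝ => F (r₁ - (tstar - t)) t) :=
    hFc.comp (hac.prodMk continuous_id)
  have hPhiDcont : Continuous PhiD := by
    apply Continuous.add
    · exact (hKcont.comp (hbc.prodMk continuous_id)).sub
        (hKcont.comp (hac.prodMk continuous_id))
    · exact continuous_id.mul
        ((((hKFtcont.comp (hbc.prodMk continuous_id)).sub
          (hKFtcont.comp (hac.prodMk continuous_id))).sub hFbc).sub hFac)
  -- FTC in time
  have hFTC : ∫ t in t₁..tstar, PhiD t = Phi tstar - Phi t₁ :=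
    intervalIntegral.integral_eq_sub_of_hasDerivAt (fun t _ => hPhi t)
      (hPhiDcont.intervalIntegrable t₁ tstar)
  -- inner integral identity
  have hinner : ∀ t : ℝ,
      (∫ s in (r₁ - (tstar - t))..(r₂ + (tstar - t)),
          (2 * f s t * g s
            + (t * deriv (fun t' => f s t') t + s * deriv (fun s' => f s' t) s) * g s
            + s * f s t * deriv g s))
      = PhiD t + (tstar + r₂) * F (r₂ + (tstar - t)) t
          + (tstar - r₁) * F (r₁ - (tstar - t)) t := by
    intro t
    have e1 : (∫ s in (r₁ - (tstar - t))..(r₂ + (tstar - t)),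
        (2 * f s t * g s
          + (t * deriv (fun t' => f s t') t + s * deriv (fun s' => f s' t) s) * g s
          + s * f s t * deriv g s))
        = ∫ s in (r₁ - (tstar - t))..(r₂ + (tstar - t)),
            ((F s t + t * Ft s t) + (F s t + s * Fs s t)) := by
      apply intervalIntegral.integral_congr
      intro s _
      show 2 * f s t * g s
          + (t * deriv (fun t' => f s t') t + s * deriv (fun s' => f s' t) s) * g s
          + s * f s t * deriv g s
        = F s t + t * Ft s t + (F s t + s * Fs s t)
      rw [(hDt s t).deriv, (hDs s t).deriv, (hg' s).deriv]
      simp only [hF_def, hFt_def, hFs_def]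
      ring
    have e2 : (∫ s in (r₁ - (tstar - t))..(r₂ + (tstar - t)),
        ((F s t + t * Ft s t) + (F s t + s * Fs s t)))
        = (∫ s in (r₁ - (tstar - t))..(r₂ + (tstar - t)), (F s t + t * Ft s t))
          + ∫ s in (r₁ - (tstar - t))..(r₂ + (tstar - t)), (F s t + s * Fs s t) :=
      intervalIntegral.integral_add
        (((hFc1 t).add (continuous_const.mul (hFtc1 t))).intervalIntegrable _ _)
        (((hFc1 t).add (continuous_id.mul (hFsc1 t))).intervalIntegrable _ _)
    have e3 : (∫ s in (r₁ - (tstar - t))..(r₂ + (tstar - t)), (F s t + s * Fs s t))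
        = (r₂ + (tstar - t)) * F (r₂ + (tstar - t)) t
          - (r₁ - (tstar - t)) * F (r₁ - (tstar - t)) t := by
      apply intervalIntegral.integral_eq_sub_of_hasDerivAt (f := fun s => s * F s t)
        (fun s _ => hsF_deriv s t)
      exact ((hFc1 t).add (continuous_id.mul (hFsc1 t))).intervalIntegrable _ _
    have e4 : (∫ s in (r₁ - (tstar - t))..(r₂ + (tstar - t)), (F s t + t * Ft s t))
        = (∫ s in (r₁ - (tstar - t))..(r₂ + (tstar - t)), F s t)
          + t * ∫ s in (r₁ - (tstar - t))..(r₂ + (tstar - t)), Ft s t := by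
      rw [intervalIntegral.integral_add ((hFc1 t).intervalIntegrable _ _)
        ((show Continuous fun s => t * Ft s t from continuous_const.mul (hFtc1 t)).intervalIntegrable _ _),
        intervalIntegral.integral_const_mul]
    have e5 : (∫ s in (r₁ - (tstar - t))..(r₂ + (tstar - t)), F s t)
        = K (r₂ + (tstar - t), t) - K (r₁ - (tstar - t), t) :=
      (intervalIntegral.integral_interval_sub_left ((hFc1 t).intervalIntegrable _ _)
        ((hFc1 t).intervalIntegrable _ _)).symm
    have e6 : (∫ s in (r₁ - (tstar - t))..(r₂ + (tstar - t)), Ft s t)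
        = (∫ s in r₁..(r₂ + (tstar - t)), Ft s t)
          - ∫ s in r₁..(r₁ - (tstar - t)), Ft s t :=
      (intervalIntegral.integral_interval_sub_left ((hFtc1 t).intervalIntegrable _ _)
        ((hFtc1 t).intervalIntegrable _ _)).symm
    rw [e1, e2, e3, e4, e5, e6]
    show _ = (K (r₂ + (tstar - t), t) - K (r₁ - (tstar - t), t))
        + t * (((∫ s in r₁..(r₂ + (tstar - t)), Ft s t)
            - (∫ s in r₁..(r₁ - (tstar - t)), Ft s t))
          - F (r₂ + (tstar - t)) t - F (r₁ - (tstar - t)) t)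
        + (tstar + r₂) * F (r₂ + (tstar - t)) t
        + (tstar - r₁) * F (r₁ - (tstar - t)) t
    ring
  -- outer integral
  have hOuter : (∫ t in t₁..tstar, ∫ s in (r₁ - (tstar - t))..(r₂ + (tstar - t)),
        (2 * f s t * g s
          + (t * deriv (fun t' => f s t') t + s * deriv (fun s' => f s' t) s) * g s
          + s * f s t * deriv g s))
      = (Phi tstar - Phi t₁)
        + (tstar + r₂) * (∫ t in t₁..tstar, F (r₂ + (tstar - t)) t)
        + (tstar - r₁) * (∫ t in t₁..tstar, F (r₁ - (tstar - t)) t) := by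
    rw [intervalIntegral.integral_congr (g := fun t =>
        PhiD t + (tstar + r₂) * F (r₂ + (tstar - t)) t
          + (tstar - r₁) * F (r₁ - (tstar - t)) t) (fun t _ => hinner t)]
    rw [intervalIntegral.integral_add
        ((show Continuous fun t =>
          PhiD t + (tstar + r₂) * F (r₂ + (tstar - t)) t from hPhiDcont.add (continuous_const.mul hFbc)).intervalIntegrable _ _)
        ((show Continuous fun t =>
          (tstar - r₁) * F (r₁ - (tstar - t)) t from continuous_const.mul hFac).intervalIntegrable _ _),
      intervalIntegral.integral_add (hPhiDcont.intervalIntegrable _ _)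
        ((show Continuous fun t =>
          (tstar + r₂) * F (r₂ + (tstar - t)) t from continuous_const.mul hFbc).intervalIntegrable _ _),
      intervalIntegral.integral_const_mul, intervalIntegral.integral_const_mul, hFTC]
  -- change of variables on the null boundary integrals
  have hU : (∫ u in (t₁ - (tstar + r₂) / 2)..(tstar - (tstar + r₂) / 2),
        f ((tstar + r₂) / 2 - u) ((tstar + r₂) / 2 + u) * g ((tstar + r₂) / 2 - u))
      = ∫ t in t₁..tstar, F (r₂ + (tstar - t)) t := by
    have h1 : Set.EqOn (fun u => f ((tstar + r₂) / 2 - u) ((tstar + r₂) / 2 + u)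
          * g ((tstar + r₂) / 2 - u))
        (fun u => (fun t => F (r₂ + (tstar - t)) t) ((tstar + r₂) / 2 + u))
        (Set.uIcc (t₁ - (tstar + r₂) / 2) (tstar - (tstar + r₂) / 2)) := by
      intro u _
      show f ((tstar + r₂) / 2 - u) ((tstar + r₂) / 2 + u) * g ((tstar + r₂) / 2 - u)
        = F (r₂ + (tstar - ((tstar + r₂) / 2 + u))) ((tstar + r₂) / 2 + u)
      rw [show r₂ + (tstar - ((tstar + r₂) / 2 + u)) = (tstar + r₂) / 2 - u by ring]
    rw [intervalIntegral.integral_congr h1,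
      intervalIntegral.integral_comp_add_left (fun t => F (r₂ + (tstar - t)) t)
        ((tstar + r₂) / 2),
      show (tstar + r₂) / 2 + (t₁ - (tstar + r₂) / 2) = t₁ by ring,
      show (tstar + r₂) / 2 + (tstar - (tstar + r₂) / 2) = tstar by ring]
  have hV : (∫ v in (t₁ - (tstar - r₁) / 2)..(tstar - (tstar - r₁) / 2),
        f (v - (tstar - r₁) / 2) (v + (tstar - r₁) / 2) * g (v - (tstar - r₁) / 2))
      = ∫ t in t₁..tstar, F (r₁ - (tstar - t)) t := by
    have h1 : Set.EqOn (fun v => f (v - (tstar - r₁) / 2) (v + (tstar - r₁) / 2)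
          * g (v - (tstar - r₁) / 2))
        (fun v => (fun t => F (r₁ - (tstar - t)) t) (v + (tstar - r₁) / 2))
        (Set.uIcc (t₁ - (tstar - r₁) / 2) (tstar - (tstar - r₁) / 2)) := by
      intro v _
      show f (v - (tstar - r₁) / 2) (v + (tstar - r₁) / 2) * g (v - (tstar - r₁) / 2)
        = F (r₁ - (tstar - (v + (tstar - r₁) / 2))) (v + (tstar - r₁) / 2)
      rw [show r₁ - (tstar - (v + (tstar - r₁) / 2)) = v - (tstar - r₁) / 2 by ring]
    rw [intervalIntegral.integral_congr h1,
      intervalIntegral.integral_comp_add_right (fun t => F (r₁ - (tstar - t)) t)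
        ((tstar - r₁) / 2),
      show t₁ - (tstar - r₁) / 2 + (tstar - r₁) / 2 = t₁ by ring,
      show tstar - (tstar - r₁) / 2 + (tstar - r₁) / 2 = tstar by ring]
  -- values of Phi at the endpoints
  have hPhiT : Phi tstar = tstar * ∫ s in r₁..r₂, f s tstar * g s := by
    show tstar * (K (r₂ + (tstar - tstar), tstar) - K (r₁ - (tstar - tstar), tstar)) = _
    rw [show r₂ + (tstar - tstar) = r₂ by ring, show r₁ - (tstar - tstar) = r₁ by ring]
    show tstar * ((∫ s in r₁..r₂, F s tstar) - ∫ s in r₁..r₁, F s tstar) = _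
    rw [intervalIntegral.integral_same, sub_zero]
  have hPhi1 : Phi t₁
      = t₁ * ∫ s in (r₁ - (tstar - t₁))..(r₂ + (tstar - t₁)), f s t₁ * g s := by
    show t₁ * (K (r₂ + (tstar - t₁), t₁) - K (r₁ - (tstar - t₁), t₁)) = _
    have e5 : (∫ s in (r₁ - (tstar - t₁))..(r₂ + (tstar - t₁)), F s t₁)
        = K (r₂ + (tstar - t₁), t₁) - K (r₁ - (tstar - t₁), t₁) :=
      (intervalIntegral.integral_interval_sub_left ((hFc1 t₁).intervalIntegrable _ _)
        ((hFc1 t₁).intervalIntegrable _ _)).symm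
    rw [← e5]
  -- final assembly
  rw [hU, hV, hOuter, hPhiT, hPhi1]
  ring
end
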